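/- arXiv:1701.00306 — 2 statements merged into one kernel-verified Lean document; each statement's English description precedes it below -/
import Mathlib

section
/- Let λ₁,…,λ_m be positive real numbers, let c₁,…,c_m be positive real numbers, and let α > 0 be a real number. Then 0 < (∑_{i=1}^m 1/(c_i + λ_i α))⁻¹ − (∑_{i=1}^m 1/c_i)⁻¹, and moreover this difference is at most α · max_i λ_i. In particular the difference is O(α) as α → 0. -/
/-!
With `S = ∑ 1/x i` and `T = ∑ 1/y i`, one has `T⁻¹ - S⁻¹ = (S - T) / (S T)`. If `y i ≤ x i + δ` with `δ ≥ 0`,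
then `S - T = ∑ (y i - x i) / (x i y i) ≤ δ ∑ (1 / x i) (1 / y i) ≤ δ S T`, bounding each `1 / y i`
by the whole sum `T`; hence the increase of the reciprocal of the harmonic sum is at most `δ`.
-/

namespace Finset

variable {ι : Type*} {s : Finset ι} {x y : ι → ℝ}

theorem inv_sum_inv_lt_inv_sum_inv (hs : s.Nonempty) (hx : ∀ i ∈ s, 0 < x i)
    (hxy : ∀ i ∈ s, x i < y i) :
    (∑ i ∈ s, (x i)⁻¹)⁻¹ < (∑ i ∈ s, (y i)⁻¹)⁻¹ := by
  have hy : ∀ i ∈ s, 0 < y i := fun i hi => (hx i hi).trans (hxy i hi)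
  have hT : 0 < ∑ i ∈ s, (y i)⁻¹ := sum_pos (fun i hi => inv_pos.2 (hy i hi)) hs
  exact inv_strictAnti₀ hT <|
    sum_lt_sum_of_nonempty hs fun i hi => inv_strictAnti₀ (hx i hi) (hxy i hi)

theorem sum_inv_sub_sum_inv_le_mul {δ : ℝ} (hδ : 0 ≤ δ) (hx : ∀ i ∈ s, 0 < x i)
    (hy : ∀ i ∈ s, 0 < y i) (hyx : ∀ i ∈ s, y i ≤ x i + δ) :
    ∑ i ∈ s, (x i)⁻¹ - ∑ i ∈ s, (y i)⁻¹ ≤ δ * ((∑ i ∈ s, (x i)⁻¹) * ∑ i ∈ s, (y i)⁻¹) := by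
  rw [← sum_sub_distrib, sum_mul, mul_sum]
  refine sum_le_sum fun i hi => ?_
  have hxi := hx i hi
  have hyi := hy i hi
  have hyi_le : (y i)⁻¹ ≤ ∑ j ∈ s, (y j)⁻¹ :=
    single_le_sum (fun j hj => (inv_pos.2 (hy j hj)).le) hi
  calc (x i)⁻¹ - (y i)⁻¹ = (y i - x i) * ((x i)⁻¹ * (y i)⁻¹) := by field_simp
    _ ≤ δ * ((x i)⁻¹ * (y i)⁻¹) := by
        gcongr
        linarith [hyx i hi]
    _ ≤ δ * ((x i)⁻¹ * ∑ j ∈ s, (y j)⁻¹) := by gcongr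

theorem inv_sum_inv_sub_inv_sum_inv_le {δ : ℝ} (hs : s.Nonempty) (hδ : 0 ≤ δ)
    (hx : ∀ i ∈ s, 0 < x i) (hy : ∀ i ∈ s, 0 < y i) (hyx : ∀ i ∈ s, y i ≤ x i + δ) :
    (∑ i ∈ s, (y i)⁻¹)⁻¹ - (∑ i ∈ s, (x i)⁻¹)⁻¹ ≤ δ := by
  have hS : 0 < ∑ i ∈ s, (x i)⁻¹ := sum_pos (fun i hi => inv_pos.2 (hx i hi)) hs
  have hT : 0 < ∑ i ∈ s, (y i)⁻¹ := sum_pos (fun i hi => inv_pos.2 (hy i hi)) hs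
  have key := sum_inv_sub_sum_inv_le_mul hδ hx hy hyx
  rw [inv_sub_inv hT.ne' hS.ne', div_le_iff₀ (mul_pos hT hS)]
  linarith

end Finset

open Finset

/-- Harmonic-sum comparison: for positive reals `c i` perturbed by `λ i * α`, the
reciprocal of the sum of reciprocals strictly increases, with increase at most
`α * max_i λ i`. -/
theorem stmt0 (m : ℕ) (hm : 0 < m) (lam c : Fin m → ℝ)
    (hlam : ∀ i, 0 < lam i) (hc : ∀ i, 0 < c i) (α : ℝ) (hα : 0 < α) :
    0 < (∑ i, (c i + lam i * α)⁻¹)⁻¹ - (∑ i, (c i)⁻¹)⁻¹ ∧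
    (∑ i, (c i + lam i * α)⁻¹)⁻¹ - (∑ i, (c i)⁻¹)⁻¹ ≤
      α * Finset.univ.sup' ⟨⟨0, hm⟩, Finset.mem_univ _⟩ lam := by
  set M := univ.sup' ⟨⟨0, hm⟩, mem_univ _⟩ lam
  have hne : (univ : Finset (Fin m)).Nonempty := ⟨⟨0, hm⟩, mem_univ _⟩
  have hlam_le : ∀ i, lam i ≤ M := fun i => le_sup' lam (mem_univ i)
  have hc_lt : ∀ i ∈ univ, c i < c i + lam i * α := fun i _ => by
    linarith [mul_pos (hlam i) hα]
  have hc_le : ∀ i ∈ univ, c i + lam i * α ≤ c i + α * M := fun i _ => by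
    nlinarith [hlam_le i]
  refine ⟨sub_pos.2 (inv_sum_inv_lt_inv_sum_inv hne (fun i _ => hc i) hc_lt), ?_⟩
  exact inv_sum_inv_sub_inv_sum_inv_le hne
    (mul_nonneg hα.le ((hlam ⟨0, hm⟩).le.trans (hlam_le _))) (fun i _ => hc i)
    (fun i hi => (hc i).trans (hc_lt i hi)) hc_le
end

section
/- Let P ⊂ ℝ^r be a compact convex polytope containing the origin O in its interior, and let u : P → ℝ be a convex function with u ≥ 0 and u(O) = 0. Then there exists a constant Λ > 0, depending only on P (not on u), such that ∫_P u dy ≤ Λ ∫_{∂P} u dσ, where dσ is the surface measure on ∂P. -/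
/-!
If `u ≥ 0` is convex with `u 0 = 0`, then `u (a • y) ≤ a * u y` for `a ∈ [0, 1]`. Writing a point
`x ≠ 0` of `P` as `a • y` with `a` its gauge and `y` on `∂P`, every superlevel set `{u > t} ∩ P`
lies in the cone `[0, 1] • B` over the boundary superlevel set `B = {u > t} ∩ ∂P`. Let `R` be the
radius of a ball around `0` containing `P`. The cone over a set of diameter `δ` in that ball is
covered by about `R / δ` balls of radius `2δ`, so its volume is `O(δ ^ (r - 1))`; covering `B` by
small sets gives `vol ([0, 1] • B) ≤ Λ μH[r - 1] B` with `Λ` depending only on `R`. Integrating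
in `t` (layer cake) yields the inequality. The boundary integral is finite because `∂P` is the
image of the boundary of a cube under the radial projection, which is Lipschitz there.
-/

open MeasureTheory Metric Set Module Filter Topology Bornology
open scoped ENNReal NNReal Pointwise

section

variable {E : Type*} [NormedAddCommGroup E] [NormedSpace ℝ E]

theorem ConvexOn.apply_smul_le_mul {P : Set E} {u : E → ℝ} (hu : ConvexOn ℝ P u)
    (h0 : (0 : E) ∈ P) (hu0 : u 0 = 0) {x : E} (hx : x ∈ P) {a : ℝ} (ha0 : 0 ≤ a) (ha1 : a ≤ 1) :
    u (a • x) ≤ a * u x := by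
  simpa [hu0] using hu.2 h0 hx (sub_nonneg.2 ha1) ha0 (sub_add_cancel 1 a)

theorem superlevel_inter_subset_Icc_smul_frontier {P : Set E} (hP : Convex ℝ P) (h0 : P ∈ 𝓝 0)
    (hPc : IsCompact P) {u : E → ℝ} (hu : ConvexOn ℝ P u) (hnn : ∀ y ∈ P, 0 ≤ u y)
    (hu0 : u 0 = 0) {t : ℝ} (ht : 0 ≤ t) :
    {y | t < u y} ∩ P ⊆ Icc (0 : ℝ) 1 • ({y | t < u y} ∩ frontier P) := by
  rintro x ⟨hxt, hxP⟩
  have hx0 : x ≠ 0 := by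
    rintro rfl
    exact (hxt.trans_eq hu0).not_ge ht
  have ha0 : 0 < gauge P x :=
    (gauge_pos (absorbent_nhds_zero h0) ((NormedSpace.isVonNBounded_iff ℝ).2 hPc.isBounded)).2 hx0
  have ha1 : gauge P x ≤ 1 := gauge_le_one_of_mem hxP
  set y := (gauge P x)⁻¹ • x
  have hy : y ∈ frontier P := by
    rw [← gauge_eq_one_iff_mem_frontier hP h0, gauge_smul_of_nonneg (inv_nonneg.2 ha0.le),
      smul_eq_mul, inv_mul_cancel₀ ha0.ne']
  have hxy : gauge P x • y = x := smul_inv_smul₀ ha0.ne' x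
  have hyP : y ∈ P := hPc.isClosed.frontier_subset hy
  refine ⟨gauge P x, ⟨ha0.le, ha1⟩, y, ⟨?_, hy⟩, hxy⟩
  calc t < u x := hxt
    _ ≤ gauge P x * u y := by
      simpa only [hxy] using hu.apply_smul_le_mul (mem_of_mem_nhds h0) hu0 hyP ha0.le ha1
    _ ≤ u y := mul_le_of_le_one_left (hnn y hyP) ha1

theorem LipschitzWith.lipschitzOnWith_inv_smul {f : E → ℝ} {K : ℝ≥0} (hf : LipschitzWith K f)
    {S : Set E} {c M : ℝ} (hc : 0 < c) (hcf : ∀ y ∈ S, c ≤ f y) (hM : ∀ y ∈ S, ‖y‖ ≤ M) :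
    LipschitzOnWith (M * K / c ^ 2 + c⁻¹).toNNReal (fun y ↦ (f y)⁻¹ • y) S := by
  refine LipschitzOnWith.of_dist_le_mul fun y hy y' hy' ↦ ?_
  have hfy := hc.trans_le (hcf y hy)
  have hfy' := hc.trans_le (hcf y' hy')
  have hinv : |(f y)⁻¹ - (f y')⁻¹| ≤ K / c ^ 2 * dist y y' := by
    rw [inv_sub_inv hfy.ne' hfy'.ne', abs_div, abs_of_pos (mul_pos hfy hfy'),
      div_le_iff₀ (by positivity), abs_sub_comm, ← Real.dist_eq]
    calc dist (f y) (f y') ≤ K * dist y y' := hf.dist_le_mul y y'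
      _ = K / c ^ 2 * dist y y' * c ^ 2 := by field_simp
      _ ≤ K / c ^ 2 * dist y y' * (f y * f y') := by
        gcongr; rw [sq]; exact mul_le_mul (hcf y hy) (hcf y' hy') hc.le hfy.le
  calc dist ((f y)⁻¹ • y) ((f y')⁻¹ • y')
      ≤ dist ((f y)⁻¹ • y) ((f y')⁻¹ • y) + dist ((f y')⁻¹ • y) ((f y')⁻¹ • y') :=
        dist_triangle _ _ _
    _ = |(f y)⁻¹ - (f y')⁻¹| * ‖y‖ + (f y')⁻¹ * dist y y' := by
        rw [dist_eq_norm, ← sub_smul, norm_smul, Real.norm_eq_abs, dist_smul₀,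
          Real.norm_of_nonneg (inv_nonneg.2 hfy'.le)]
    _ ≤ K / c ^ 2 * dist y y' * M + c⁻¹ * dist y y' := by
        gcongr
        · exact hM y hy
        · exact hcf y' hy'
    _ = (M * K / c ^ 2 + c⁻¹) * dist y y' := by ring
    _ ≤ (M * K / c ^ 2 + c⁻¹).toNNReal * dist y y' := by gcongr; exact Real.le_coe_toNNReal _

theorem frontier_subset_image_gauge_inv_smul {P S : Set E} (hP : Convex ℝ P) (h0 : P ∈ 𝓝 0)
    (hS : ∀ x ≠ 0, ∃ c : ℝ, 0 < c ∧ c • x ∈ S) :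
    frontier P ⊆ (fun y ↦ (gauge P y)⁻¹ • y) '' S := by
  intro x hx
  have hx0 : x ≠ 0 := by
    rintro rfl
    exact hx.2 (mem_interior_iff_mem_nhds.2 h0)
  obtain ⟨c, hc, hcx⟩ := hS x hx0
  refine ⟨c • x, hcx, ?_⟩
  dsimp only
  rw [gauge_smul_of_nonneg hc.le, (gauge_eq_one_iff_mem_frontier hP h0).2 hx, smul_eq_mul,
    mul_one, inv_smul_smul₀ hc.ne']

theorem Icc_smul_closedBall_subset_iUnion {x : E} {R δ : ℝ} (hR : 0 < R) (hx : ‖x‖ ≤ R)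
    (hδ : 0 < δ) :
    Icc (0 : ℝ) 1 • closedBall x δ ⊆
      ⋃ j ∈ Finset.range (⌈R / δ⌉₊ + 1), closedBall ((j / ⌈R / δ⌉₊ : ℝ) • x) (2 * δ) := by
  set N := ⌈R / δ⌉₊
  have hRN : R ≤ δ * N := by rw [← div_le_iff₀' hδ]; exact Nat.le_ceil _
  have hN : (0 : ℝ) < N := by nlinarith
  rintro _ ⟨t, ⟨ht0, ht1⟩, y, hy, rfl⟩
  set j := ⌊t * N⌋₊
  have hj : (j : ℝ) ≤ t * N := Nat.floor_le (by positivity)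
  have hj' : t * N < j + 1 := Nat.lt_floor_add_one _
  have hjN : j ≤ N := by
    have : (j : ℝ) ≤ N := hj.trans (by nlinarith)
    exact_mod_cast this
  refine mem_biUnion (Finset.mem_range.2 (Nat.lt_succ_of_le hjN)) (mem_closedBall.2 ?_)
  have hty : dist (t • y) (t • x) ≤ δ := by
    rw [dist_smul₀, Real.norm_of_nonneg ht0]
    nlinarith [mem_closedBall.1 hy, dist_nonneg (x := y) (y := x)]
  have htx : dist (t • x) ((j / N : ℝ) • x) ≤ δ := by
    have hjt : 0 ≤ t - j / N := by rw [sub_nonneg, div_le_iff₀ hN]; linarith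
    have hjt' : t - j / N ≤ 1 / N := by
      rw [sub_le_iff_le_add, ← add_div, le_div_iff₀ hN]; linarith
    rw [dist_eq_norm, ← sub_smul, norm_smul, Real.norm_of_nonneg hjt]
    calc (t - j / N) * ‖x‖ ≤ 1 / N * (δ * N) := by gcongr; linarith
      _ = δ := by field_simp
  linarith [dist_triangle (t • y) (t • x) ((j / N : ℝ) • x)]

variable [MeasurableSpace E] [BorelSpace E]

theorem Convex.hausdorffMeasure_frontier_lt_top_of_rays {P S : Set E} (hP : Convex ℝ P)
    (h0 : P ∈ 𝓝 0) (hPb : IsBounded P) {a M : ℝ} (ha : 0 < a)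
    (hSM : S ⊆ closedBall 0 M \ ball 0 a) (hS : ∀ x ≠ 0, ∃ c : ℝ, 0 < c ∧ c • x ∈ S) {d : ℝ}
    (hd : 0 ≤ d) (hSd : μH[d] S < ⊤) :
    μH[d] (frontier P) < ⊤ := by
  obtain ⟨R, hR, hPR⟩ := hPb.subset_closedBall_lt 0 0
  obtain ⟨K, hK⟩ := hP.lipschitz_gauge h0
  have hgauge : ∀ y ∈ S, a / R ≤ gauge P y := fun y hy ↦
    (div_le_div_of_nonneg_right (by simpa using (hSM hy).2) hR.le).trans
      (le_gauge_of_subset_closedBall (absorbent_nhds_zero h0) hR.le hPR)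
  have hL := hK.lipschitzOnWith_inv_smul (div_pos ha hR) hgauge fun y hy ↦ by
    simpa using (hSM hy).1
  calc μH[d] (frontier P) ≤ μH[d] ((fun y ↦ (gauge P y)⁻¹ • y) '' S) :=
        measure_mono (frontier_subset_image_gauge_inv_smul hP h0 hS)
    _ ≤ _ ^ d * μH[d] S := hL.hausdorffMeasure_image_le hd
    _ < ⊤ := ENNReal.mul_lt_top (ENNReal.rpow_lt_top_of_nonneg hd ENNReal.coe_ne_top) hSd

variable [FiniteDimensional ℝ E] (μ : Measure E) [μ.IsAddHaarMeasure]

theorem measure_Icc_smul_closedBall_le {x : E} {R δ : ℝ} (hR : 0 < R) (hx : ‖x‖ ≤ R)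
    (hδ : 0 < δ) :
    μ (Icc (0 : ℝ) 1 • closedBall x δ) ≤
      ENNReal.ofReal ((R / δ + 2) * (2 * δ) ^ finrank ℝ E) * μ (closedBall 0 1) := by
  set N := ⌈R / δ⌉₊
  have hN : (N + 1 : ℕ) ≤ ENNReal.ofReal (R / δ + 2) := by
    rw [← ENNReal.ofReal_natCast]
    exact ENNReal.ofReal_le_ofReal <| by
      push_cast; linarith [Nat.ceil_lt_add_one (div_pos hR hδ).le]
  calc μ (Icc (0 : ℝ) 1 • closedBall x δ)
      ≤ ∑ j ∈ Finset.range (N + 1), μ (closedBall ((j / N : ℝ) • x) (2 * δ)) :=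
        (measure_mono (Icc_smul_closedBall_subset_iUnion hR hx hδ)).trans
          (measure_biUnion_finset_le _ _)
    _ = (N + 1 : ℕ) * (ENNReal.ofReal ((2 * δ) ^ finrank ℝ E) * μ (closedBall 0 1)) := by
        simp only [Measure.addHaar_closedBall' μ _ (by positivity : 0 ≤ 2 * δ),
          Finset.sum_const, Finset.card_range, nsmul_eq_mul]
    _ ≤ ENNReal.ofReal (R / δ + 2) *
          (ENNReal.ofReal ((2 * δ) ^ finrank ℝ E) * μ (closedBall 0 1)) := by
        gcongr
    _ = _ := by rw [ENNReal.ofReal_mul (by positivity), mul_assoc]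

theorem measure_Icc_smul_le_of_subset_closedBall (hn : 1 ≤ finrank ℝ E) {R δ : ℝ} (hR : 0 < R)
    (hδ : 0 < δ) (hδ1 : δ ≤ 1) {x : E} (hx : ‖x‖ ≤ R) {U : Set E} (hU : U ⊆ closedBall x δ) :
    μ (Icc (0 : ℝ) 1 • U) ≤ ENNReal.ofReal (2 ^ finrank ℝ E * (R + 2)) * μ (closedBall 0 1) *
      ENNReal.ofReal δ ^ ((finrank ℝ E : ℝ) - 1) := by
  set n := finrank ℝ E
  have hpow : (R / δ + 2) * (2 * δ) ^ n = 2 ^ n * (R + 2 * δ) * δ ^ (n - 1) := by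
    obtain ⟨k, hk⟩ := Nat.exists_eq_add_of_le' hn
    rw [hk, Nat.add_sub_cancel, pow_succ, mul_pow, pow_succ]
    field_simp
  calc μ (Icc (0 : ℝ) 1 • U) ≤ μ (Icc (0 : ℝ) 1 • closedBall x δ) :=
        measure_mono (smul_subset_smul_left hU)
    _ ≤ ENNReal.ofReal ((R / δ + 2) * (2 * δ) ^ n) * μ (closedBall 0 1) :=
        measure_Icc_smul_closedBall_le μ hR hx hδ
    _ ≤ ENNReal.ofReal (2 ^ n * (R + 2) * δ ^ (n - 1)) * μ (closedBall 0 1) := by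
        rw [hpow]; gcongr; linarith
    _ = _ := by
        rw [ENNReal.ofReal_mul (by positivity), ENNReal.ofReal_pow hδ.le, ← ENNReal.rpow_natCast,
          Nat.cast_sub hn, Nat.cast_one, mul_right_comm]

theorem measure_Icc_smul_le_ediam_rpow (hn : 1 ≤ finrank ℝ E) {R : ℝ} (hR : 0 < R) {U : Set E}
    (hU : U ⊆ closedBall 0 R) (hd : ediam U ≤ 1) :
    μ (Icc (0 : ℝ) 1 • U) ≤ ENNReal.ofReal (2 ^ finrank ℝ E * (R + 2)) * μ (closedBall 0 1) *
      ediam U ^ ((finrank ℝ E : ℝ) - 1) := by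
  rcases U.eq_empty_or_nonempty with rfl | ⟨x, hx⟩
  · simp
  have hxR : ‖x‖ ≤ R := by simpa using hU hx
  have hU_ball {δ : ℝ} (hδ0 : 0 ≤ δ) (hδ : ediam U ≤ ENNReal.ofReal δ) : U ⊆ closedBall x δ :=
    fun y hy ↦ mem_closedBall.2 <| (edist_le_ofReal hδ0).1 <| (edist_le_ediam_of_mem hy hx).trans hδ
  by_cases hd0 : ediam U = 0
  · rcases hn.eq_or_lt with hn1 | hn2
    · simpa [← hn1, hd0] using measure_Icc_smul_le_of_subset_closedBall μ hn hR one_pos le_rfl hxR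
        (hU_ball zero_le_one (by simpa using hd))
    · suffices μ (Icc (0 : ℝ) 1 • U) = 0 by simp [this]
      have hspan : Icc (0 : ℝ) 1 • U ⊆ (ℝ ∙ x : Submodule ℝ E) := by
        rintro _ ⟨t, -, y, hy, rfl⟩
        rw [(ediam_eq_zero_iff.1 hd0) hy hx]
        exact Submodule.smul_mem _ _ (Submodule.mem_span_singleton_self x)
      refine measure_mono_null hspan (Measure.addHaar_submodule μ _ fun htop ↦ ?_)
      have := finrank_span_le_card (R := ℝ) ({x} : Set E)
      rw [htop, finrank_top] at this
      simp only [toFinset_singleton, Finset.card_singleton] at this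
      omega
  · have hdt : ediam U ≠ ⊤ := ne_top_of_le_ne_top ENNReal.one_ne_top hd
    have hδ := ENNReal.toReal_pos hd0 hdt
    simpa [ENNReal.ofReal_toReal hdt] using measure_Icc_smul_le_of_subset_closedBall μ hn hR hδ
      (ENNReal.toReal_le_of_le_ofReal zero_le_one (by simpa using hd)) hxR
      (hU_ball hδ.le (ENNReal.ofReal_toReal hdt).ge)

theorem exists_measure_Icc_smul_le_hausdorffMeasure (hn : 1 ≤ finrank ℝ E) (R : ℝ) :
    ∃ C : ℝ≥0, 0 < C ∧ ∀ B ⊆ closedBall (0 : E) R,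
      μ (Icc (0 : ℝ) 1 • B) ≤ C * μH[finrank ℝ E - 1] B := by
  set d : ℝ := finrank ℝ E - 1
  have hd : 0 ≤ d := by simp only [d, sub_nonneg, Nat.one_le_cast, hn]
  set R' := max R 1
  have hR' : 0 < R' := lt_max_of_lt_right one_pos
  set C := ENNReal.ofReal (2 ^ finrank ℝ E * (R' + 2)) * μ (closedBall 0 1)
  have hC0 : C ≠ 0 :=
    mul_ne_zero (ENNReal.ofReal_pos.2 (by positivity)).ne' (measure_closedBall_pos μ 0 one_pos).ne'
  have hCtop : C ≠ ⊤ := ENNReal.mul_ne_top ENNReal.ofReal_ne_top measure_closedBall_lt_top.ne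
  refine ⟨C.toNNReal, ENNReal.toNNReal_pos hC0 hCtop, fun B hB ↦ ?_⟩
  -- intersecting with the ball lets the bound for sets of small diameter apply to every `S`
  let ν : OuterMeasure E :=
    { measureOf S := μ (Icc (0 : ℝ) 1 • (S ∩ closedBall 0 R'))
      empty := by simp
      mono h := measure_mono (smul_subset_smul_left (inter_subset_inter_left _ h))
      iUnion_nat S _ := by
        simp only [iUnion_inter, smul_iUnion]
        exact measure_iUnion_le _ }
  have hν : ν ≤ OuterMeasure.mkMetric (C • fun r ↦ r ^ d) :=
    OuterMeasure.le_mkMetric _ ν 1 one_pos fun S hS ↦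
      (measure_Icc_smul_le_ediam_rpow μ hn hR' inter_subset_right
        ((ediam_mono inter_subset_left).trans hS)).trans
      (mul_le_mul_right (ENNReal.rpow_le_rpow (ediam_mono inter_subset_left) hd) _)
  rw [OuterMeasure.mkMetric_smul _ hCtop hC0] at hν
  have hBR : B ∩ closedBall 0 R' = B :=
    inter_eq_left.2 (hB.trans (closedBall_subset_closedBall (le_max_left _ _)))
  calc μ (Icc (0 : ℝ) 1 • B) = ν B := by simp [ν, hBR]
    _ ≤ C * OuterMeasure.mkMetric (fun r ↦ r ^ d) B := hν B
    _ = C.toNNReal * μH[d] B := by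
        rw [ENNReal.coe_toNNReal hCtop, OuterMeasure.coe_mkMetric]; rfl

end

theorem Fin.lipschitzWith_insertNth {β : Type*} [PseudoMetricSpace β] {m : ℕ} (i : Fin (m + 1))
    (a : β) : LipschitzWith 1 (Fin.insertNth (α := fun _ ↦ β) i a) := by
  refine LipschitzWith.of_dist_le_mul fun z z' ↦ ?_
  rw [NNReal.coe_one, one_mul, dist_pi_le_iff dist_nonneg]
  intro j
  rcases Fin.eq_self_or_eq_succAbove i j with rfl | ⟨k, rfl⟩
  · simp
  · simpa using dist_le_pi_dist z z' k

-- `Fin (m + 1) → ℝ` carries the sup norm: this sphere is the boundary of the cube `[-1, 1]^(m+1)`.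
theorem sphere_subset_iUnion_image_insertNth (m : ℕ) :
    sphere (0 : Fin (m + 1) → ℝ) 1 ⊆
      ⋃ i, ⋃ a ∈ ({-1, 1} : Set ℝ), Fin.insertNth i a '' closedBall (0 : Fin m → ℝ) 1 := by
  intro y hy
  rw [mem_sphere_zero_iff_norm] at hy
  obtain ⟨i, hi⟩ : ∃ i, 1 ≤ ‖y i‖ := by
    by_contra! h
    exact (((pi_norm_lt_iff one_pos).2 h).trans_eq hy.symm).false
  have hyi : |y i| = 1 := le_antisymm ((norm_le_pi_norm y i).trans_eq hy) hi
  simp only [mem_iUnion]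
  refine ⟨i, y i, ?_, Fin.removeNth i y, ?_, Fin.insertNth_self_removeNth i y⟩
  · rcases (abs_eq zero_le_one).1 hyi with h | h <;> simp [h]
  · rw [mem_closedBall_zero_iff, pi_norm_le_iff_of_nonneg zero_le_one]
    exact fun k ↦ (norm_le_pi_norm y _).trans_eq hy

theorem hausdorffMeasure_sphere_pi_lt_top (m : ℕ) :
    μH[m] (sphere (0 : Fin (m + 1) → ℝ) 1) < ⊤ := by
  have hcube : μH[m] (closedBall (0 : Fin m → ℝ) 1) < ⊤ := by
    have := hausdorffMeasure_pi_real (ι := Fin m)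
    rw [Fintype.card_fin] at this
    rw [this]
    exact measure_closedBall_lt_top
  refine (measure_mono (sphere_subset_iUnion_image_insertNth m)).trans_lt <|
    (measure_iUnion_fintype_le _ _).trans_lt <| ENNReal.sum_lt_top.2 fun i _ ↦ ?_
  refine measure_biUnion_lt_top (toFinite _) fun a _ ↦ ?_
  refine ((Fin.lipschitzWith_insertNth i a).hausdorffMeasure_image_le (Nat.cast_nonneg m)
    _).trans_lt ?_
  simpa using hcube

theorem EuclideanSpace.hausdorffMeasure_frontier_lt_top {m : ℕ}
    {P : Set (EuclideanSpace ℝ (Fin (m + 1)))} (hP : Convex ℝ P) (h0 : P ∈ 𝓝 0)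
    (hPb : IsBounded P) : μH[m] (frontier P) < ⊤ := by
  obtain ⟨K, htoLp⟩ : ∃ K, LipschitzWith K (WithLp.toLp 2 : (Fin (m + 1) → ℝ) → _) :=
    ⟨_, PiLp.lipschitzWith_toLp 2 _⟩
  refine hP.hausdorffMeasure_frontier_lt_top_of_rays h0 hPb one_pos
    (S := WithLp.toLp 2 '' sphere 0 1) (M := K) ?_ (fun x hx ↦ ?_) (Nat.cast_nonneg m) ?_
  · rintro _ ⟨z, hz, rfl⟩
    rw [mem_sphere_zero_iff_norm] at hz
    refine ⟨?_, ?_⟩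
    · simpa [hz] using htoLp.norm_le_mul (by simp) z
    · simpa [hz] using (PiLp.lipschitzWith_ofLp 2 fun _ : Fin (m + 1) ↦ ℝ).norm_le_mul
        (by simp) (WithLp.toLp 2 z)
  · have hx' : WithLp.ofLp x ≠ 0 := by simpa using hx
    refine ⟨‖WithLp.ofLp x‖⁻¹, by positivity, ‖WithLp.ofLp x‖⁻¹ • WithLp.ofLp x, ?_, by simp⟩
    rw [mem_sphere_zero_iff_norm, norm_smul, norm_inv, norm_norm,
      inv_mul_cancel₀ (norm_ne_zero_iff.2 hx')]
  · exact (htoLp.hausdorffMeasure_image_le (Nat.cast_nonneg m) _).trans_lt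
      (ENNReal.mul_lt_top (ENNReal.rpow_lt_top_of_nonneg (Nat.cast_nonneg m) ENNReal.coe_ne_top)
        (hausdorffMeasure_sphere_pi_lt_top m))

theorem integral_le_mul_integral_of_meas_lt_le {α : Type*} [MeasurableSpace α]
    {μ ν : Measure α} {f : α → ℝ} (hμ : 0 ≤ᵐ[μ] f) (hfμ : AEStronglyMeasurable f μ)
    (hν : 0 ≤ᵐ[ν] f) (hfν : Integrable f ν) {C : ℝ≥0}
    (h : ∀ t > 0, μ {a | t < f a} ≤ C * ν {a | t < f a}) :
    ∫ a, f a ∂μ ≤ C * ∫ a, f a ∂ν := by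
  have hlayer : ∫⁻ a, ENNReal.ofReal (f a) ∂μ ≤ C * ∫⁻ a, ENNReal.ofReal (f a) ∂ν := by
    rw [lintegral_eq_lintegral_meas_lt μ hμ hfμ.aemeasurable,
      lintegral_eq_lintegral_meas_lt ν hν hfν.aemeasurable,
      ← lintegral_const_mul' _ _ ENNReal.coe_ne_top]
    exact setLIntegral_mono' measurableSet_Ioi h
  rw [← ofReal_integral_eq_lintegral_ofReal hfν hν] at hlayer
  rw [integral_eq_lintegral_of_nonneg_ae hμ hfμ,
    ← ENNReal.toReal_ofReal (integral_nonneg_of_ae hν)]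
  exact (ENNReal.toReal_mono (by finiteness) hlayer).trans_eq (by simp)

/-- For a compact convex polytope `P ⊂ ℝ^r` (the convex hull of a finite set) with the
origin in its interior, there is a constant `Λ > 0` depending only on `P` such that for
every nonnegative convex function `u` on `P`, continuous on `P`, vanishing at the origin,
the integral of `u` over `P` is bounded by `Λ` times the integral of `u` over `∂P` with
respect to the `(r-1)`-dimensional Hausdorff (surface) measure. -/
theorem stmt4 (r : ℕ) (V : Finset (EuclideanSpace ℝ (Fin r)))
    (P : Set (EuclideanSpace ℝ (Fin r)))
    (hP : P = convexHull ℝ (V : Set (EuclideanSpace ℝ (Fin r))))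
    (hO : (0 : EuclideanSpace ℝ (Fin r)) ∈ interior P) :
    ∃ Λ : ℝ, 0 < Λ ∧ ∀ u : EuclideanSpace ℝ (Fin r) → ℝ,
      ConvexOn ℝ P u → (∀ y ∈ P, 0 ≤ u y) → u 0 = 0 → ContinuousOn u P →
      ∫ y in P, u y ≤ Λ * ∫ y in frontier P, u y ∂(μH[(r : ℝ) - 1]) := by
  obtain _ | m := r
  · refine ⟨1, one_pos, fun u _ _ hu0 _ ↦ ?_⟩
    have hu : u = 0 := funext fun y ↦ by rw [Subsingleton.elim y 0, hu0]; rfl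
    simp [hu]
  have hPc : IsCompact P := hP ▸ V.finite_toSet.isCompact_convexHull ℝ
  have hPconv : Convex ℝ P := hP ▸ convex_convexHull ℝ _
  have h0 : P ∈ 𝓝 0 := mem_interior_iff_mem_nhds.1 hO
  have hfr : frontier P ⊆ P := hPc.isClosed.frontier_subset
  have hfrm : MeasurableSet (frontier P) := isClosed_frontier.measurableSet
  have hσ : μH[((m + 1 : ℕ) : ℝ) - 1] (frontier P) < ⊤ := by
    simpa using EuclideanSpace.hausdorffMeasure_frontier_lt_top hPconv h0 hPc.isBounded
  obtain ⟨R, hPR⟩ := hPc.isBounded.subset_closedBall 0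
  obtain ⟨C, hC, hcone⟩ := exists_measure_Icc_smul_le_hausdorffMeasure
    (volume : Measure (EuclideanSpace ℝ (Fin (m + 1)))) (by simp) R
  rw [finrank_euclideanSpace_fin] at hcone
  refine ⟨C, hC, fun u hu hnn hu0 hcont ↦ ?_⟩
  obtain ⟨M, hM⟩ := hPc.exists_bound_of_continuousOn hcont
  refine integral_le_mul_integral_of_meas_lt_le (ae_restrict_of_forall_mem hPc.measurableSet hnn)
    (hcont.aestronglyMeasurable hPc.measurableSet)
    (ae_restrict_of_forall_mem hfrm fun y hy ↦ hnn y (hfr hy))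
    (IntegrableOn.of_bound hσ ((hcont.mono hfr).aestronglyMeasurable hfrm) M
      (ae_restrict_of_forall_mem hfrm fun y hy ↦ hM y (hfr hy)))
    fun t ht ↦ ?_
  rw [Measure.restrict_apply' hPc.measurableSet, Measure.restrict_apply' hfrm]
  exact (measure_mono (superlevel_inter_subset_Icc_smul_frontier hPconv h0 hPc hu hnn hu0
    ht.le)).trans (hcone _ (inter_subset_right.trans (hfr.trans hPR)))
end
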